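/- arXiv:1009.3145 — 3 statements merged into one kernel-verified Lean document; each statement's English description precedes it below -/
import Mathlib

section
/- Let d > 0, σ > 0, Δ > 0, and let L be distributed as the absolute value of a centered normal random variable with standard deviation σd. Let T be the 2Δ-periodic triangle wave with T(0)=1, T(Δ)=0, linear in between. Then E[T(L)] = 1/2 + Σ_{i=0}^{∞} exp(−(π(2i+1)σd/(√2 Δ))²) / (π(i+1/2))². -/
/-!
On `[0, 1]` the Fourier series of the second Bernoulli polynomial gives
`Σₙ cos (2πnu) / n² = π² (u² - u + 1/6)`; subtracting the even frequencies (the same series at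
`2u`) leaves the odd ones, and this yields the cosine series of the triangle wave,
`T x = 1/2 + Σᵢ 4 / (π² (2i+1)²) cos ((2i+1) π x / Δ)`.
Its coefficients are summable, so it may be integrated termwise against the Gaussian; `cos` is
even, so `|Z|` may be replaced by `Z`, and `E[cos (a Z)] = exp (-(σd)² a² / 2)` is the real part
of the characteristic function.
-/

open MeasureTheory ProbabilityTheory Real
open scoped NNReal

noncomputable def rmod (a b : ℝ) : ℝ := a - b * ⌊a / b⌋

/-- The even `2Δ`-periodic triangle wave with `T(0) = 1`, `T(Δ) = 0`, linear in between. -/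
noncomputable def tri (Δ l : ℝ) : ℝ :=
  if rmod l (2 * Δ) ≤ Δ then 1 - rmod l (2 * Δ) / Δ else rmod l (2 * Δ) / Δ - 1

lemma hasSum_one_div_nat_sq_mul_cos {x : ℝ} (hx : x ∈ Set.Icc (0 : ℝ) 1) :
    HasSum (fun n : ℕ ↦ 1 / (n : ℝ) ^ 2 * cos (2 * π * n * x)) (π ^ 2 * (x ^ 2 - x + 1 / 6)) := by
  have h := hasSum_one_div_nat_pow_mul_cos one_ne_zero hx
  rw [← bernoulliFun, Nat.mul_one, bernoulliFun_two] at h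
  convert h using 1
  rw [Nat.factorial_two]
  push_cast
  ring

lemma hasSum_cos_odd_div_sq {u : ℝ} (hu0 : 0 ≤ u) (hu : u ≤ 1 / 2) :
    HasSum (fun i : ℕ ↦ cos (2 * π * (2 * i + 1) * u) / (2 * i + 1) ^ 2)
      (π ^ 2 / 8 * (1 - 4 * u)) := by
  set f : ℕ → ℝ := fun n ↦ 1 / (n : ℝ) ^ 2 * cos (2 * π * n * u)
  have hf : HasSum f (π ^ 2 * (u ^ 2 - u + 1 / 6)) :=
    hasSum_one_div_nat_sq_mul_cos ⟨hu0, by linarith⟩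
  have heven : HasSum (fun k ↦ f (2 * k)) (π ^ 2 * ((2 * u) ^ 2 - 2 * u + 1 / 6) / 4) := by
    refine ((hasSum_one_div_nat_sq_mul_cos ⟨by linarith, by linarith⟩).div_const 4).congr_fun
      fun k ↦ ?_
    simp only [f]
    push_cast
    rcases eq_or_ne (k : ℝ) 0 with hk | hk
    · simp [hk]
    · field_simp
      ring
  have hodd : HasSum (fun k ↦ f (2 * k + 1)) (∑' k, f (2 * k + 1)) :=
    (hf.summable.comp_injective fun _ _ h ↦ by omega).hasSum
  have hodd_val : ∑' k, f (2 * k + 1) = π ^ 2 / 8 * (1 - 4 * u) := by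
    linarith [(heven.even_add_odd hodd).unique hf]
  rw [hodd_val] at hodd
  convert hodd using 2 with i
  simp only [f]
  push_cast
  ring

lemma hasSum_abs_two_mul_sub_one {u : ℝ} (hu0 : 0 ≤ u) (hu1 : u ≤ 1) :
    HasSum (fun i : ℕ ↦ 4 / (π ^ 2 * (2 * i + 1) ^ 2) * cos (2 * π * (2 * i + 1) * u))
      (|2 * u - 1| - 1 / 2) := by
  have hhalf : ∀ w, 0 ≤ w → w ≤ 1 / 2 →
      HasSum (fun i : ℕ ↦ 4 / (π ^ 2 * (2 * i + 1) ^ 2) * cos (2 * π * (2 * i + 1) * w))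
        (1 / 2 - 2 * w) := fun w hw0 hw ↦ by
    have h := (hasSum_cos_odd_div_sq hw0 hw).mul_left (4 / π ^ 2)
    rw [show 4 / π ^ 2 * (π ^ 2 / 8 * (1 - 4 * w)) = 1 / 2 - 2 * w by field_simp; ring] at h
    exact h.congr_fun fun i ↦ by rw [div_mul_div_comm, div_mul_eq_mul_div]
  rcases le_total u (1 / 2) with hu | hu
  · rw [abs_of_nonpos (by linarith)]
    convert hhalf u hu0 hu using 1
    ring
  · rw [abs_of_nonneg (by linarith)]
    convert hhalf (1 - u) (by linarith) (by linarith) using 1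
    · ext i
      congr 1
      rw [← cos_int_mul_two_pi_sub _ (2 * i + 1)]
      push_cast
      congr 1; ring
    · ring

lemma rmod_eq_mul_fract {b : ℝ} (hb : b ≠ 0) (a : ℝ) : rmod a b = b * Int.fract (a / b) := by
  rw [rmod, Int.fract, mul_sub, mul_div_cancel₀ _ hb]

lemma tri_eq_abs_fract {Δ : ℝ} (hΔ : 0 < Δ) (x : ℝ) :
    tri Δ x = |2 * Int.fract (x / (2 * Δ)) - 1| := by
  rw [tri, rmod_eq_mul_fract (by positivity)]
  have h2 : 2 * Δ * Int.fract (x / (2 * Δ)) / Δ = 2 * Int.fract (x / (2 * Δ)) := by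
    field_simp
  rw [h2]
  split_ifs with h
  · rw [abs_of_nonpos (by nlinarith)]; ring
  · rw [abs_of_pos (by nlinarith)]

lemma measurable_tri {Δ : ℝ} (hΔ : 0 < Δ) : Measurable (tri Δ) := by
  rw [funext (tri_eq_abs_fract hΔ)]
  fun_prop

lemma abs_tri_le_one {Δ : ℝ} (hΔ : 0 < Δ) (x : ℝ) : |tri Δ x| ≤ 1 := by
  rw [tri_eq_abs_fract hΔ, abs_abs, abs_le]
  constructor <;> linarith [Int.fract_nonneg (x / (2 * Δ)), Int.fract_lt_one (x / (2 * Δ))]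

lemma hasSum_tri {Δ : ℝ} (hΔ : 0 < Δ) (x : ℝ) :
    HasSum (fun i : ℕ ↦ 4 / (π ^ 2 * (2 * i + 1) ^ 2) * cos ((2 * i + 1) * π / Δ * x))
      (tri Δ x - 1 / 2) := by
  rw [tri_eq_abs_fract hΔ]
  refine (hasSum_abs_two_mul_sub_one (Int.fract_nonneg _) (Int.fract_lt_one _).le).congr_fun
    fun i ↦ ?_
  have harg : 2 * π * (2 * i + 1) * Int.fract (x / (2 * Δ))
      = (2 * i + 1) * π / Δ * x - ((2 * i + 1) * ⌊x / (2 * Δ)⌋ : ℤ) * (2 * π) := by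
    rw [Int.fract]
    push_cast
    field_simp
  rw [harg, cos_sub_int_mul_two_pi]

lemma integral_cos_mul_eq_re_charFun (μ : Measure ℝ) [IsFiniteMeasure μ] (t : ℝ) :
    ∫ x, cos (t * x) ∂μ = (charFun μ t).re := by
  have hint : Integrable (fun x : ℝ ↦ Complex.exp (t * x * Complex.I)) μ :=
    (integrable_const (1 : ℝ)).mono (by fun_prop) (ae_of_all _ fun x ↦ by
      simp [← Complex.ofReal_mul, Complex.norm_exp_ofReal_mul_I])
  rw [charFun_apply_real, ← RCLike.re_to_complex, ← integral_re hint]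
  congr 1 with x
  rw [← Complex.ofReal_mul, RCLike.re_to_complex, Complex.exp_ofReal_mul_I_re]

lemma integral_cos_mul_gaussianReal (v : ℝ≥0) (t : ℝ) :
    ∫ x, cos (t * x) ∂gaussianReal 0 v = exp (-(v * t ^ 2 / 2)) := by
  rw [integral_cos_mul_eq_re_charFun, charFun_gaussianReal, ← Complex.exp_ofReal_re]
  push_cast
  ring_nf

lemma hasSum_integral_of_norm_le_of_summable {α ι E : Type*} [MeasurableSpace α] {μ : Measure α}
    [IsFiniteMeasure μ] [Countable ι] [NormedAddCommGroup E] [NormedSpace ℝ E]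
    {F : ι → α → E} {f : α → E} {C : ι → ℝ} (hF : ∀ i, AEStronglyMeasurable (F i) μ)
    (hFC : ∀ i x, ‖F i x‖ ≤ C i) (hC : Summable C) (hf : ∀ x, HasSum (fun i ↦ F i x) (f x)) :
    HasSum (fun i ↦ ∫ x, F i x ∂μ) (∫ x, f x ∂μ) :=
  hasSum_integral_of_dominated_convergence (fun i _ ↦ C i) hF (fun i ↦ ae_of_all _ (hFC i))
    (ae_of_all _ fun _ ↦ hC) (integrable_const _) (ae_of_all _ hf)

lemma hasSum_integral_tri_abs_gaussianReal {Δ : ℝ} (hΔ : 0 < Δ) (v : ℝ≥0) :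
    HasSum (fun i : ℕ ↦ 4 / (π ^ 2 * (2 * i + 1) ^ 2) * exp (-(v * ((2 * i + 1) * π / Δ) ^ 2 / 2)))
      (∫ z, tri Δ |z| ∂gaussianReal 0 v - 1 / 2) := by
  have hint : Integrable (fun z ↦ tri Δ |z|) (gaussianReal 0 v) :=
    Integrable.of_bound ((measurable_tri hΔ).comp measurable_abs).aestronglyMeasurable 1
      (ae_of_all _ fun z ↦ abs_tri_le_one hΔ _)
  have hsub : ∫ z, tri Δ |z| ∂gaussianReal 0 v - 1 / 2
      = ∫ z, (tri Δ |z| - 1 / 2) ∂gaussianReal 0 v := by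
    simp [integral_sub hint (integrable_const _)]
  rw [hsub]
  set c : ℕ → ℝ := fun i ↦ 4 / (π ^ 2 * (2 * i + 1) ^ 2)
  set a : ℕ → ℝ := fun i ↦ (2 * i + 1) * π / Δ
  -- at `u = 0` all cosines are `1`
  have hc : Summable c := by
    simpa using (hasSum_abs_two_mul_sub_one le_rfl zero_le_one).summable
  have hbound : ∀ i z, ‖c i * cos (a i * z)‖ ≤ c i := fun i z ↦ by
    rw [norm_mul, Real.norm_of_nonneg (by positivity)]
    exact mul_le_of_le_one_right (by positivity) (abs_cos_le_one _)
  have hlim : ∀ z, HasSum (fun i ↦ c i * cos (a i * z)) (tri Δ |z| - 1 / 2) := fun z ↦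
    (hasSum_tri hΔ |z|).congr_fun fun i ↦ by
      rw [← cos_abs (a i * z), abs_mul, abs_of_pos (by positivity : 0 < a i)]
  refine (hasSum_integral_of_norm_le_of_summable (fun i ↦ by fun_prop) hbound hc hlim).congr_fun
    fun i ↦ ?_
  rw [integral_const_mul, integral_cos_mul_gaussianReal]

theorem expectation_tri_of_abs_gaussian_general (σ d Δ : ℝ) (hΔ : 0 < Δ)
    (v : NNReal) (hv : (v : ℝ) = (σ * d) ^ 2) :
    ∫ z, tri Δ |z| ∂(gaussianReal 0 v) = 1 / 2 +
      ∑' i : ℕ, Real.exp (-(π * (2 * (i : ℝ) + 1) * σ * d / (Real.sqrt 2 * Δ)) ^ 2) /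
        (π * ((i : ℝ) + 1 / 2)) ^ 2 := by
  have hterm : ∀ i : ℕ, 4 / (π ^ 2 * (2 * i + 1) ^ 2) * exp (-(v * ((2 * i + 1) * π / Δ) ^ 2 / 2))
      = exp (-(π * (2 * (i : ℝ) + 1) * σ * d / (√2 * Δ)) ^ 2) / (π * ((i : ℝ) + 1 / 2)) ^ 2 := by
    intro i
    have hexp : -(v * ((2 * i + 1) * π / Δ) ^ 2 / 2)
        = -(π * (2 * (i : ℝ) + 1) * σ * d / (√2 * Δ)) ^ 2 := by
      rw [hv, div_pow _ (√2 * Δ), mul_pow √2, sq_sqrt zero_le_two]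
      ring
    rw [hexp]
    field_simp
    ring
  rw [← funext hterm, (hasSum_integral_tri_abs_gaussianReal hΔ v).tsum_eq]
  ring

/-- If `L = |Z|` with `Z ~ N(0,(σd)²)` and `T` is the `2Δ`-periodic triangle wave, then
`E[T(L)] = 1/2 + Σ_{i=0}^∞ exp(−(π(2i+1)σd/(√2Δ))²)/(π(i+1/2))²`. -/
theorem expectation_tri_of_abs_gaussian (σ d Δ : ℝ) (hσ : 0 < σ) (hd : 0 < d) (hΔ : 0 < Δ)
    (v : NNReal) (hv : (v : ℝ) = (σ * d) ^ 2) :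
    ∫ z, tri Δ |z| ∂(gaussianReal 0 v) = 1 / 2 +
      ∑' i : ℕ, Real.exp (-(π * (2 * (i : ℝ) + 1) * σ * d / (Real.sqrt 2 * Δ)) ^ 2) /
        (π * ((i : ℝ) + 1 / 2)) ^ 2 :=
  expectation_tri_of_abs_gaussian_general σ d Δ hΔ v hv
end

section
/- Let w ~ Uniform([0,Δ]) and suppose two intervals [a,b] and [a',b'] each of length at most 2c_pε < Δ with center distance l = |(a+b)/2 − (a'+b')/2|. If l mod 2Δ ∈ [2c_pε, Δ], then the probability over the dither w that Q((t+w)/Δ) is constant on [a,b], constant on [a',b'], and the two constants differ, is at least 1 − (Δ+2c_pε−(l mod 2Δ))/Δ. -/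
open MeasureTheory Real

/-- Binary quantizer `Q(x) = ⌈x⌉ mod 2`. -/
noncomputable def Q (x : ℝ) : ℤ := ⌈x⌉ % 2

/-- The uniform probability measure on `[0,Δ]`. -/
noncomputable def unif (Δ : ℝ) : Measure ℝ :=
  (ENNReal.ofReal Δ)⁻¹ • volume.restrict (Set.Icc 0 Δ)

lemma ceil_div_eq {Δ : ℝ} (hΔ : 0 < Δ) (k : ℤ) {x : ℝ}
    (h1 : (k : ℝ) * Δ < x) (h2 : x ≤ ((k:ℝ) + 1) * Δ) : ⌈x / Δ⌉ = k + 1 := by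
  rw [Int.ceil_eq_iff]
  constructor
  · push_cast
    rw [lt_div_iff₀ hΔ]
    linarith
  · rw [div_le_iff₀ hΔ]
    push_cast
    linarith

lemma rmod_eq_fract {a b : ℝ} (hb : b ≠ 0) : rmod a b = b * Int.fract (a / b) := by
  unfold rmod Int.fract
  field_simp

lemma rmod_nonneg {a b : ℝ} (hb : 0 < b) : 0 ≤ rmod a b := by
  rw [rmod_eq_fract hb.ne']
  exact mul_nonneg hb.le (Int.fract_nonneg _)

lemma rmod_lt {a b : ℝ} (hb : 0 < b) : rmod a b < b := by
  rw [rmod_eq_fract hb.ne']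
  nlinarith [Int.fract_lt_one (a / b)]

lemma good_subset (Δ cp ε a b a' b' m : ℝ) (hΔ : 0 < Δ)
    (hab : a ≤ b) (hab' : a' ≤ b')
    (hlen : b - a ≤ 2 * cp * ε) (hlen' : b' - a' ≤ 2 * cp * ε)
    (hm : m ≤ Δ) (k n : ℤ)
    (hc : (a + b) / 2 = (a' + b') / 2 + 2 * Δ * n + m) :
    Set.Ioc ((k : ℝ) * Δ - m + cp * ε - (a' + b') / 2)
        ((k : ℝ) * Δ - cp * ε - (a' + b') / 2) ⊆
      {w : ℝ |
        (∀ t ∈ Set.Icc a b, Q ((t + w) / Δ) = Q ((a + w) / Δ)) ∧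
        (∀ t ∈ Set.Icc a' b', Q ((t + w) / Δ) = Q ((a' + w) / Δ)) ∧
        Q ((a + w) / Δ) ≠ Q ((a' + w) / Δ)} := by
  intro w hw
  obtain ⟨hw1, hw2⟩ := hw
  have hceil' : ∀ t ∈ Set.Icc a' b', ⌈(t + w) / Δ⌉ = k := by
    intro t ht
    have h1 : ((k - 1 : ℤ) : ℝ) * Δ < t + w := by
      push_cast
      nlinarith [ht.1, ht.2]
    have h2 : t + w ≤ (((k - 1 : ℤ) : ℝ) + 1) * Δ := by
      push_cast
      nlinarith [ht.1, ht.2]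
    have := ceil_div_eq hΔ (k - 1) h1 h2
    omega
  have hceil : ∀ t ∈ Set.Icc a b, ⌈(t + w) / Δ⌉ = k + 2 * n + 1 := by
    intro t ht
    have h1 : ((k + 2 * n : ℤ) : ℝ) * Δ < t + w := by
      push_cast
      nlinarith [ht.1, ht.2]
    have h2 : t + w ≤ (((k + 2 * n : ℤ) : ℝ) + 1) * Δ := by
      push_cast
      nlinarith [ht.1, ht.2]
    have := ceil_div_eq hΔ (k + 2 * n) h1 h2
    omega
  have ha : a ∈ Set.Icc a b := ⟨le_refl a, hab⟩
  have ha' : a' ∈ Set.Icc a' b' := ⟨le_refl a', hab'⟩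
  refine ⟨?_, ?_, ?_⟩
  · intro t ht
    unfold Q
    rw [hceil t ht, hceil a ha]
  · intro t ht
    unfold Q
    rw [hceil' t ht, hceil' a' ha']
  · unfold Q
    rw [hceil a ha, hceil' a' ha']
    omega

lemma unif_Ioc_bound (Δ : ℝ) (hΔ : 0 < Δ) (S : Set ℝ) (hS : MeasurableSet S)
    (hSI : S ⊆ Set.Icc 0 Δ) (δ : ℝ) (hvol : volume S = ENNReal.ofReal δ) :
    ENNReal.ofReal (δ / Δ) ≤ unif Δ S := by
  unfold unif
  rw [Measure.smul_apply, Measure.restrict_apply hS, Set.inter_eq_left.mpr hSI, hvol,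
    smul_eq_mul, ENNReal.ofReal_div_of_pos hΔ, div_eq_mul_inv, mul_comm]

lemma key (Δ cp ε a b a' b' l : ℝ)
    (hΔ : 0 < Δ) (hcp : 0 < cp) (hε : 0 < ε)
    (hab : a ≤ b) (hab' : a' ≤ b')
    (hlen : b - a ≤ 2 * cp * ε) (hlen' : b' - a' ≤ 2 * cp * ε)
    (hl : (a + b) / 2 - (a' + b') / 2 = l)
    (hmod1 : 2 * cp * ε ≤ rmod l (2 * Δ)) (hmod2 : rmod l (2 * Δ) ≤ Δ) :
    ENNReal.ofReal ((rmod l (2 * Δ) - 2 * cp * ε) / Δ) ≤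
      unif Δ {w : ℝ |
        (∀ t ∈ Set.Icc a b, Q ((t + w) / Δ) = Q ((a + w) / Δ)) ∧
        (∀ t ∈ Set.Icc a' b', Q ((t + w) / Δ) = Q ((a' + w) / Δ)) ∧
        Q ((a + w) / Δ) ≠ Q ((a' + w) / Δ)} := by
  set E := {w : ℝ |
        (∀ t ∈ Set.Icc a b, Q ((t + w) / Δ) = Q ((a + w) / Δ)) ∧
        (∀ t ∈ Set.Icc a' b', Q ((t + w) / Δ) = Q ((a' + w) / Δ)) ∧
        Q ((a + w) / Δ) ≠ Q ((a' + w) / Δ)} with hE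
  set m := rmod l (2 * Δ) with hm
  set n := ⌊l / (2 * Δ)⌋ with hn
  have hlm : l = 2 * Δ * n + m := by rw [hm]; unfold rmod; ring
  have hc : (a + b) / 2 = (a' + b') / 2 + 2 * Δ * n + m := by linarith
  set c' := (a' + b') / 2 with hc'
  set r := rmod (-(cp * ε) - c') Δ with hr
  have hr0 : 0 ≤ r := rmod_nonneg hΔ
  have hr1 : r < Δ := rmod_lt hΔ
  set j := ⌊(-(cp * ε) - c') / Δ⌋ with hj
  have hrk : r = ((-j : ℤ) : ℝ) * Δ - cp * ε - c' := by
    rw [hr]; unfold rmod; push_cast; ring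
  set δ := m - 2 * cp * ε with hδ
  have h2cpε : 0 < 2 * cp * ε := by positivity
  have hδ0 : 0 ≤ δ := by linarith
  have hδΔ : δ < Δ := by linarith
  have hsub : ∀ k : ℤ, Set.Ioc ((k : ℝ) * Δ - m + cp * ε - c')
      ((k : ℝ) * Δ - cp * ε - c') ⊆ E :=
    fun k => good_subset Δ cp ε a b a' b' m hΔ hab hab' hlen hlen' hmod2 k n hc
  have h1 : Set.Ioc (r - δ) r ⊆ E := by
    have h := hsub (-j)
    have e1 : ((-j : ℤ) : ℝ) * Δ - m + cp * ε - c' = r - δ := by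
      rw [hrk]; ring
    have e2 : ((-j : ℤ) : ℝ) * Δ - cp * ε - c' = r := hrk.symm
    rwa [e1, e2] at h
  have h2 : Set.Ioc (r + Δ - δ) (r + Δ) ⊆ E := by
    have h := hsub (-j + 1)
    have e1 : ((-j + 1 : ℤ) : ℝ) * Δ - m + cp * ε - c' = r + Δ - δ := by
      rw [hrk]; push_cast; ring
    have e2 : ((-j + 1 : ℤ) : ℝ) * Δ - cp * ε - c' = r + Δ := by
      rw [hrk]; push_cast; ring
    rwa [e1, e2] at h
  rcases le_or_gt δ r with hcase | hcase
  · refine le_trans (unif_Ioc_bound Δ hΔ (Set.Ioc (r - δ) r) measurableSet_Ioc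
      ?_ δ ?_) (measure_mono h1)
    · exact fun x hx => ⟨by linarith [hx.1], le_trans hx.2 hr1.le⟩
    · rw [Real.volume_Ioc]; congr 1; ring
  · set S := Set.Ioc 0 r ∪ Set.Ioc (r + Δ - δ) Δ with hS
    have hSE : S ⊆ E := by
      apply Set.union_subset
      · exact le_trans (Set.Ioc_subset_Ioc_left (by linarith)) h1
      · exact le_trans (Set.Ioc_subset_Ioc_right (by linarith)) h2
    refine le_trans (unif_Ioc_bound Δ hΔ S
      (MeasurableSet.union measurableSet_Ioc measurableSet_Ioc) ?_ δ ?_)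
      (measure_mono hSE)
    · apply Set.union_subset
      · exact fun x hx => ⟨hx.1.le, le_trans hx.2 hr1.le⟩
      · exact fun x hx => ⟨by linarith [hx.1], hx.2⟩
    · rw [hS, measure_union ?_ measurableSet_Ioc]
      · rw [Real.volume_Ioc, Real.volume_Ioc,
          ← ENNReal.ofReal_add (by linarith) (by linarith)]
        congr 1; ring
      · apply Set.Ioc_disjoint_Ioc.mpr
        calc min r Δ ≤ r := min_le_left _ _
        _ ≤ r + Δ - δ := by linarith
        _ ≤ max 0 (r + Δ - δ) := le_max_right _ _

/-- One case of the no-guarantee bound (Eq. 12): if two intervals `[a,b]` and `[a',b']`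
each have length at most `2c_pε < Δ` and their center distance `l` satisfies
`l mod 2Δ ∈ [2c_pε, Δ]`, then with probability at least `1 − (Δ+2c_pε−(l mod 2Δ))/Δ`
over the dither `w ~ Uniform([0,Δ])` the quantizer is constant on each interval and the
two values differ. -/
theorem ball_inconsistency_one_case (Δ cp ε a b a' b' l : ℝ)
    (hΔ : 0 < Δ) (hcp : 0 < cp) (hε : 0 < ε)
    (hab : a ≤ b) (hab' : a' ≤ b')
    (hlen : b - a ≤ 2 * cp * ε) (hlen' : b' - a' ≤ 2 * cp * ε)
    (hsmall : 2 * cp * ε < Δ)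
    (hl : l = |(a + b) / 2 - (a' + b') / 2|)
    (hmod1 : 2 * cp * ε ≤ rmod l (2 * Δ)) (hmod2 : rmod l (2 * Δ) ≤ Δ) :
    ENNReal.ofReal (1 - (Δ + 2 * cp * ε - rmod l (2 * Δ)) / Δ) ≤
      unif Δ {w : ℝ |
        (∀ t ∈ Set.Icc a b, Q ((t + w) / Δ) = Q ((a + w) / Δ)) ∧
        (∀ t ∈ Set.Icc a' b', Q ((t + w) / Δ) = Q ((a' + w) / Δ)) ∧
        Q ((a + w) / Δ) ≠ Q ((a' + w) / Δ)} := by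
  have hgoal : ENNReal.ofReal (1 - (Δ + 2 * cp * ε - rmod l (2 * Δ)) / Δ) =
      ENNReal.ofReal ((rmod l (2 * Δ) - 2 * cp * ε) / Δ) := by
    congr 1
    field_simp
    ring
  rw [hgoal]
  rcases le_or_gt ((a' + b') / 2) ((a + b) / 2) with hcc | hcc
  · exact key Δ cp ε a b a' b' l hΔ hcp hε hab hab' hlen hlen'
      (by rw [hl, abs_of_nonneg (by linarith)]) hmod1 hmod2
  · have h := key Δ cp ε a' b' a b l hΔ hcp hε hab' hab hlen' hlen
      (by rw [hl, abs_of_neg (by linarith)]; ring) hmod1 hmod2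
    refine le_trans h (measure_mono ?_)
    rintro w ⟨h1, h2, h3⟩
    exact ⟨h2, h1, h3.symm⟩
end

section
/- Let S be a union of L subspaces of ℝ^N, each of dimension at most K, intersected with the unit ball, and let the measurement system satisfy the single-ball-pair bound p ≤ c_r for balls of radius ε = 3d/(c_o√N) (after parameter choices). Then P(∃ x,x' ∈ S, ‖x−x'‖₂ > d, with identical M-bit quantized measurements) ≤ L²·(c_o√N/d)^{2K}·c_r^M = exp(2 log L + 2K log(c_o√N/d) − M log(1/c_r)), which tends to 0 exponentially provided M ≥ C(log L + K log(N/d)) for a suitable constant C. -/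
open MeasureTheory ProbabilityTheory Real

/-- Euclidean `ε`-ball around `x` in `ℝ^N`. -/
def ballE {N : ℕ} (ε : ℝ) (x : Fin N → ℝ) : Set (Fin N → ℝ) :=
  {v | Real.sqrt (∑ i, (v i - x i) ^ 2) ≤ ε}

/-- Distribution of a single random measurement `ω = (φ, w)`. -/
noncomputable def measLaw (N : ℕ) (v : NNReal) (Δ : ℝ) : Measure ((Fin N → ℝ) × ℝ) :=
  (Measure.pi fun _ : Fin N => gaussianReal 0 v).prod (unif Δ)

/-- Single quantized measurement `q(x) = Q((⟨x,φ⟩+w)/Δ)` for `ω = (φ,w)`. -/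
noncomputable def qmeas {N : ℕ} (Δ : ℝ) (ω : (Fin N → ℝ) × ℝ) (x : Fin N → ℝ) : ℤ :=
  Q ((∑ i, x i * ω.1 i + ω.2) / Δ)

/-!
The far pairs `T = {(x, x') ∈ S × S | d < ‖x - x'‖}` are covered, in the max-metric of `E × E`,
by the `ε`-balls around a maximal `ε`-separated subset `P ⊆ T`. Inside each of the `L²` blocks
`(V i ∩ B) × (V j ∩ B)`, `B` the unit ball, comparing the volume of the disjoint `ε/2`-balls in
`V i × V j` (dimension `≤ 2K`) with that of a ball of radius `1 + ε/2` leaves room for at most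
`(1 + 2/ε)^(2K) ≤ (3/ε)^(2K)` points of `P`. If all `M` measurements agree on a far pair, each of
them lies in the ball-pair consistency event of a nearby centre of `P`; the centres are far pairs
themselves, so the hypothesis bounds that event by `c_r`, and independence plus a union bound over
`P` give `|P| c_r^M`. Applied to a pair at distance exactly `d`, the hypothesis also forces
`2ε < d`, and `d < 2` because `S` lies in the unit ball, so `ε ≤ 1`.
-/

open Metric Set Module
open scoped NNReal ENNReal

section SignalModel

variable {Ω E β : Type*}

def subspaceUnionBall {ι : Type*} [NormedAddCommGroup E] [Module ℝ E] (V : ι → Submodule ℝ E) :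
    Set E :=
  ⋃ i, (V i : Set E) ∩ closedBall 0 1

lemma subspaceUnionBall_subset_closedBall {ι : Type*} [NormedAddCommGroup E] [Module ℝ E]
    (V : ι → Submodule ℝ E) : subspaceUnionBall V ⊆ closedBall 0 1 :=
  iUnion_subset fun _ => inter_subset_right

variable [PseudoMetricSpace E]

def ballPairConsistency (q : Ω → E → β) (ε : ℝ) (x x' : E) : Set Ω :=
  {ω | ∃ u ∈ closedBall x ε, ∃ u' ∈ closedBall x' ε, q ω u = q ω u'}

def farConsistentPairEvent (κ : Type*) (S : Set E) (q : Ω → E → β) (d : ℝ) : Set (κ → Ω) :=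
  {ωs | ∃ x ∈ S, ∃ x' ∈ S, d < dist x x' ∧ ∀ m, q (ωs m) x = q (ωs m) x'}

end SignalModel

lemma nontrivial_of_farConsistentPairEvent_nonempty {Ω E β κ : Type*} [MetricSpace E]
    {S : Set E} {q : Ω → E → β} {d : ℝ} (hd : 0 ≤ d)
    (hne : (farConsistentPairEvent κ S q d).Nonempty) : Nontrivial E := by
  obtain ⟨-, x, -, x', -, hxx', -⟩ := hne
  exact nontrivial_of_ne x x' (dist_pos.1 (hd.trans_lt hxx'))

namespace Metric

lemma IsSeparated.pairwiseDisjoint_ball {X : Type*} [PseudoMetricSpace X] {ε : ℝ≥0}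
    {C : Set X} (hC : IsSeparated ε C) : C.PairwiseDisjoint fun x => ball x (ε / 2) :=
  fun x hx y hy hxy => ball_disjoint_ball <| by
    have : (ε : ℝ≥0∞) < edist x y := hC hx hy hxy
    rw [edist_dist, ENNReal.coe_lt_ofReal] at this
    linarith

variable {E : Type*} [NormedAddCommGroup E] [NormedSpace ℝ E] {ε : ℝ≥0}

lemma IsSeparated.encard_le_of_subset_closedBall [FiniteDimensional ℝ E] (hε : 0 < ε)
    {C : Set E} (hC : IsSeparated ε C) (hCB : C ⊆ closedBall 0 1) :
    (C.encard : ℝ≥0∞) ≤ ENNReal.ofReal ((1 + 2 / ε) ^ finrank ℝ E) := by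
  borelize E
  set μ : Measure E := Measure.addHaar
  set r : ℝ := ε / 2 with hr_def
  have hr : 0 < r := by positivity
  have hdisj : C.PairwiseDisjoint fun x => ball x r := hC.pairwiseDisjoint_ball
  have hcount : C.Countable :=
    hdisj.countable_of_isOpen (fun _ _ => isOpen_ball) fun _ _ => nonempty_ball.2 hr
  have hsub : ⋃ x ∈ C, ball x r ⊆ ball 0 (1 + r) :=
    iUnion₂_subset fun x hx => ball_subset_ball' <| by
      have := hCB hx
      rw [mem_closedBall] at this
      linarith
  have hu : μ (ball 0 1) ≠ 0 := (measure_ball_pos μ 0 one_pos).ne'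
  have hu' : μ (ball 0 1) ≠ ∞ := measure_ball_lt_top.ne
  have hvol : (C.encard : ℝ≥0∞) * (ENNReal.ofReal (r ^ finrank ℝ E) * μ (ball 0 1)) ≤
      ENNReal.ofReal ((1 + 2 / ε) ^ finrank ℝ E) *
        (ENNReal.ofReal (r ^ finrank ℝ E) * μ (ball 0 1)) :=
    calc (C.encard : ℝ≥0∞) * (ENNReal.ofReal (r ^ finrank ℝ E) * μ (ball 0 1))
        = ∑' x : C, μ (ball (x : E) r) := by
          simp only [Measure.addHaar_ball_of_pos μ _ hr, ENNReal.tsum_const]; rfl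
      _ = μ (⋃ x ∈ C, ball x r) :=
          (measure_biUnion hcount hdisj fun _ _ => measurableSet_ball).symm
      _ ≤ μ (ball 0 (1 + r)) := measure_mono hsub
      _ = _ := by
          rw [Measure.addHaar_ball_of_pos μ _ (by positivity), ← mul_assoc,
            ← ENNReal.ofReal_mul (by positivity), ← mul_pow]
          congr 4
          rw [hr_def]
          field_simp
          ring
  refine (ENNReal.mul_le_mul_iff_left ?_ ?_).mp hvol
  · exact mul_ne_zero (ENNReal.ofReal_pos.2 (by positivity)).ne' hu
  · exact ENNReal.mul_ne_top ENNReal.ofReal_ne_top hu'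

lemma IsSeparated.encard_le_of_subset_image_closedBall {F X : Type*} [NormedAddCommGroup F]
    [NormedSpace ℝ F] [FiniteDimensional ℝ F] [PseudoEMetricSpace X] {f : F → X}
    (hf : Isometry f) (hε : 0 < ε) {C : Set X} (hC : IsSeparated ε C)
    (hCB : C ⊆ f '' closedBall 0 1) :
    (C.encard : ℝ≥0∞) ≤ ENNReal.ofReal ((1 + 2 / ε) ^ finrank ℝ F) := by
  set C' := f ⁻¹' C ∩ closedBall 0 1
  have hC' : f '' C' = C := by
    rw [image_preimage_inter, inter_eq_left.2 hCB]
  have hsep : IsSeparated ε C' := fun a ha b hb hab => by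
    show (ε : ℝ≥0∞) < edist a b
    rw [← hf.edist_eq]
    exact hC ha.1 hb.1 (hf.injective.ne hab)
  rw [← hC', hf.injective.injOn.encard_image]
  exact hsep.encard_le_of_subset_closedBall hε inter_subset_right

lemma IsSeparated.encard_le_of_subset_prod_submodule_balls [FiniteDimensional ℝ E]
    (V W : Submodule ℝ E) (hε : 0 < ε) {C : Set (E × E)} (hC : IsSeparated ε C)
    (hCB : C ⊆ ((V : Set E) ∩ closedBall 0 1) ×ˢ ((W : Set E) ∩ closedBall 0 1)) :
    (C.encard : ℝ≥0∞) ≤ ENNReal.ofReal ((1 + 2 / ε) ^ (finrank ℝ V + finrank ℝ W)) := by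
  rw [← Module.finrank_prod]
  refine hC.encard_le_of_subset_image_closedBall
    (isometry_subtype_coe.prodMap isometry_subtype_coe) hε ?_
  rintro ⟨x, y⟩ hxy
  obtain ⟨⟨hxV, hx⟩, hyW, hy⟩ := hCB hxy
  refine ⟨(⟨x, hxV⟩, ⟨y, hyW⟩), ?_, rfl⟩
  rw [mem_closedBall_zero_iff] at hx hy ⊢
  exact norm_prod_le_iff.2 ⟨hx, hy⟩

lemma one_add_two_div_pow_le_three_div_pow {ε : ℝ} (hε0 : 0 < ε) (hε1 : ε ≤ 1) {n m : ℕ}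
    (hnm : n ≤ m) : (1 + 2 / ε) ^ n ≤ (3 / ε) ^ m := by
  have hinv : 1 ≤ 1 / ε := one_le_one_div hε0 hε1
  have hbase : 1 + 2 / ε ≤ 3 / ε := by linarith [show 3 / ε = 1 / ε + 2 / ε by ring]
  exact (pow_le_pow_left₀ (by positivity) hbase _).trans
    (pow_le_pow_right₀ (by linarith [show 0 ≤ 2 / ε by positivity]) hnm)

lemma IsSeparated.encard_le_of_subset_subspaceUnionBall_prod [FiniteDimensional ℝ E]
    {ι : Type*} [Fintype ι] (V : ι → Submodule ℝ E) {K : ℕ} (hV : ∀ i, finrank ℝ (V i) ≤ K)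
    (hε0 : 0 < ε) (hε1 : ε ≤ 1) {C : Set (E × E)} (hC : IsSeparated ε C)
    (hCS : C ⊆ subspaceUnionBall V ×ˢ subspaceUnionBall V) :
    (C.encard : ℝ≥0∞) ≤ ENNReal.ofReal (Fintype.card ι ^ 2 * (3 / ε) ^ (2 * K)) := by
  set S : ι → Set E := fun i => (V i : Set E) ∩ closedBall 0 1
  have hcover : C ⊆ ⋃ ij : ι × ι, C ∩ S ij.1 ×ˢ S ij.2 := by
    intro p hp
    obtain ⟨hp1, hp2⟩ := hCS hp
    obtain ⟨i, hi⟩ := mem_iUnion.1 hp1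
    obtain ⟨j, hj⟩ := mem_iUnion.1 hp2
    exact mem_iUnion.2 ⟨(i, j), hp, hi, hj⟩
  calc (C.encard : ℝ≥0∞)
      ≤ ∑ ij : ι × ι, ((C ∩ S ij.1 ×ˢ S ij.2).encard : ℝ≥0∞) := by
        rw [← ENat.toENNRealRingHom_apply, ← map_sum, ENat.toENNRealRingHom_apply,
          ENat.toENNReal_le]
        exact (encard_le_encard hcover).trans (encard_iUnion_le_of_fintype _)
    _ ≤ ∑ _ij : ι × ι, ENNReal.ofReal ((3 / ε) ^ (2 * K)) := by
        refine Finset.sum_le_sum fun ⟨i, j⟩ _ => ?_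
        refine ((hC.subset inter_subset_left).encard_le_of_subset_prod_submodule_balls
          (V i) (V j) hε0 inter_subset_right).trans (ENNReal.ofReal_le_ofReal ?_)
        exact one_add_two_div_pow_le_three_div_pow (by exact_mod_cast hε0)
          (by exact_mod_cast hε1) (by linarith [hV i, hV j])
    _ = ENNReal.ofReal (Fintype.card ι ^ 2 * (3 / ε) ^ (2 * K)) := by
        rw [Finset.sum_const, nsmul_eq_mul, ENNReal.ofReal_mul (by positivity), Finset.card_univ,
          Fintype.card_prod, ← sq]
        norm_cast

variable {X : Type*} [PseudoEMetricSpace X] {A : Set X}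

lemma packingNumber_ne_top_of_forall_encard_le {B : ℝ≥0∞} (hB : B ≠ ∞)
    (h : ∀ C ⊆ A, IsSeparated ε C → (C.encard : ℝ≥0∞) ≤ B) : packingNumber ε A ≠ ⊤ := by
  obtain ⟨n, hn⟩ := ENNReal.exists_nat_gt hB
  refine ne_top_of_le_ne_top (ENat.natCast_ne_top n) ?_
  refine iSup₂_le fun C hCA => iSup_le fun hC => ?_
  rw [← ENat.toENNReal_le, ENat.toENNReal_coe]
  exact (h C hCA hC).trans hn.le

end Metric

lemma measure_biUnion_le_encard_mul {α ι : Type*} [MeasurableSpace α] (μ : Measure α)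
    {I : Set ι} (hI : I.Countable) (s : ι → Set α) {b : ℝ≥0∞} (h : ∀ i ∈ I, μ (s i) ≤ b) :
    μ (⋃ i ∈ I, s i) ≤ I.encard * b :=
  calc μ (⋃ i ∈ I, s i) ≤ ∑' i : I, μ (s i) := measure_biUnion_le μ hI s
    _ ≤ ∑' _ : I, b := ENNReal.tsum_le_tsum fun i => h i i.2
    _ = I.encard * b := ENNReal.tsum_const b

section Consistency

variable {Ω E β : Type*} [NormedAddCommGroup E] [NormedSpace ℝ E]

lemma ballPairConsistency_eq_univ (q : Ω → E → β) {ε : ℝ} {x x' : E}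
    (h : dist x x' ≤ 2 * ε) : ballPairConsistency q ε x x' = univ := by
  refine eq_univ_of_forall fun ω => ⟨midpoint ℝ x x', ?_, midpoint ℝ x x', ?_, rfl⟩
  · rw [mem_closedBall, dist_midpoint_left, Real.norm_two]; linarith
  · rw [mem_closedBall, dist_midpoint_right, Real.norm_two]; linarith

lemma lt_two_of_farConsistentPairEvent_nonempty {κ ι : Type*} {V : ι → Submodule ℝ E}
    {q : Ω → E → β} {d : ℝ} (hne : (farConsistentPairEvent κ (subspaceUnionBall V) q d).Nonempty) :
    d < 2 := by
  obtain ⟨-, x, hx, x', hx', hxx', -⟩ := hne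
  have hx1 := mem_closedBall_zero_iff.1 (subspaceUnionBall_subset_closedBall V hx)
  have hx1' := mem_closedBall_zero_iff.1 (subspaceUnionBall_subset_closedBall V hx')
  linarith [dist_le_norm_add_norm x x']

variable [MeasurableSpace Ω]

lemma two_mul_lt_of_measure_ballPairConsistency_lt_one [Nontrivial E] (μ : Measure Ω)
    [IsProbabilityMeasure μ] (q : Ω → E → β) {ε d : ℝ} (hd : 0 ≤ d)
    (h : ∀ x x' : E, d ≤ dist x x' → μ (ballPairConsistency q ε x x') < 1) : 2 * ε < d := by
  obtain ⟨y, hy⟩ := exists_norm_eq E hd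
  by_contra! hle
  have h1 := h 0 y (by rw [dist_zero_left, hy])
  rw [ballPairConsistency_eq_univ q (by rwa [dist_zero_left, hy]), measure_univ] at h1
  exact lt_irrefl _ h1

theorem measure_farConsistentPairEvent_le [FiniteDimensional ℝ E] (μ : Measure Ω) [SigmaFinite μ]
    {ι κ : Type*} [Fintype ι] [Fintype κ] (V : ι → Submodule ℝ E) {K : ℕ}
    (hV : ∀ i, finrank ℝ (V i) ≤ K) (q : Ω → E → β) {ε : ℝ≥0} (hε0 : 0 < ε) (hε1 : ε ≤ 1)
    {d c : ℝ} (hc : 0 ≤ c)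
    (hpair : ∀ x x' : E, d < dist x x' → μ (ballPairConsistency q ε x x') ≤ ENNReal.ofReal c) :
    Measure.pi (fun _ : κ => μ) (farConsistentPairEvent κ (subspaceUnionBall V) q d) ≤
      ENNReal.ofReal (Fintype.card ι ^ 2 * (3 / ε) ^ (2 * K) * c ^ Fintype.card κ) := by
  set S := subspaceUnionBall V
  set T : Set (E × E) := {p | p.1 ∈ S ∧ p.2 ∈ S ∧ d < dist p.1 p.2}
  have hsep (C : Set (E × E)) (hCT : C ⊆ T) (hC : IsSeparated ε C) :
      (C.encard : ℝ≥0∞) ≤ ENNReal.ofReal (Fintype.card ι ^ 2 * (3 / ε) ^ (2 * K)) :=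
    hC.encard_le_of_subset_subspaceUnionBall_prod V hV hε0 hε1 fun p hp =>
      ⟨(hCT hp).1, (hCT hp).2.1⟩
  have hfin := packingNumber_ne_top_of_forall_encard_le ENNReal.ofReal_ne_top hsep
  set P := maximalSeparatedSet ε T
  have hP : P.Countable :=
    (encard_ne_top_iff.mp (by rwa [encard_maximalSeparatedSet hfin])).countable
  have hcover : farConsistentPairEvent κ S q d ⊆
      ⋃ p ∈ P, univ.pi fun _ => ballPairConsistency q ε p.1 p.2 := by
    rintro ωs ⟨x, hx, x', hx', hxx', hq⟩
    obtain ⟨p, hpP, hp⟩ := mem_iUnion₂.1 <|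
      (isCover_maximalSeparatedSet hfin).subset_iUnion_closedBall
        (show (x, x') ∈ T from ⟨hx, hx', hxx'⟩)
    rw [mem_closedBall, Prod.dist_eq, max_le_iff] at hp
    exact mem_iUnion₂.2 ⟨p, hpP, fun m _ => ⟨x, hp.1, x', hp.2, hq m⟩⟩
  calc _ ≤ _ := measure_mono hcover
    _ ≤ P.encard * ENNReal.ofReal c ^ Fintype.card κ :=
        measure_biUnion_le_encard_mul _ hP _ fun p hp => by
          rw [Measure.pi_pi, Finset.prod_const, Finset.card_univ]
          exact pow_le_pow_left' (hpair _ _ (maximalSeparatedSet_subset hp).2.2) _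
    _ ≤ ENNReal.ofReal (Fintype.card ι ^ 2 * (3 / ε) ^ (2 * K)) *
          ENNReal.ofReal c ^ Fintype.card κ := by
        gcongr
        exact hsep P maximalSeparatedSet_subset isSeparated_maximalSeparatedSet
    _ = _ := by rw [← ENNReal.ofReal_pow hc, ← ENNReal.ofReal_mul (by positivity)]

end Consistency

-- `Fin N → ℝ` carries the sup metric; the Euclidean quantities of the statement live on
-- `EuclideanSpace ℝ (Fin N)`, reached through `WithLp.toLp 2`.
lemma dist_toLp_eq_sqrt_sum {N : ℕ} (x y : Fin N → ℝ) :
    dist (WithLp.toLp 2 x) (WithLp.toLp 2 y) = √(∑ i, (x i - y i) ^ 2) := by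
  simp [EuclideanSpace.dist_eq, Real.dist_eq, sq_abs]

lemma norm_toLp_eq_sqrt_sum {N : ℕ} (x : Fin N → ℝ) :
    ‖WithLp.toLp 2 x‖ = √(∑ i, x i ^ 2) := by
  simp [EuclideanSpace.norm_eq, sq_abs]

lemma mem_ballE_iff {N : ℕ} {ε : ℝ} {v x : Fin N → ℝ} :
    v ∈ ballE ε x ↔ WithLp.toLp 2 v ∈ closedBall (WithLp.toLp 2 x) ε := by
  rw [ballE, mem_ofPred_eq, mem_closedBall, dist_toLp_eq_sqrt_sum]

lemma measure_ballPairConsistency_qmeas_le {N : ℕ} (μ : Measure ((Fin N → ℝ) × ℝ))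
    {Δ ε d : ℝ} {c : ℝ≥0∞}
    (hpair : ∀ x x' : Fin N → ℝ, d ≤ √(∑ i, (x i - x' i) ^ 2) →
      μ {ω | ∃ u ∈ ballE ε x, ∃ u' ∈ ballE ε x', qmeas Δ ω u = qmeas Δ ω u'} ≤ c)
    {x x' : EuclideanSpace ℝ (Fin N)} (h : d ≤ dist x x') :
    μ (ballPairConsistency (fun ω u => qmeas Δ ω u.ofLp) ε x x') ≤ c := by
  refine (measure_mono ?_).trans (hpair x.ofLp x'.ofLp ?_)
  · rintro ω ⟨u, hu, u', hu', h⟩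
    exact ⟨u.ofLp, mem_ballE_iff.2 (by simpa using hu), u'.ofLp,
      mem_ballE_iff.2 (by simpa using hu'), h⟩
  · rwa [← dist_toLp_eq_sqrt_sum, WithLp.toLp_ofLp, WithLp.toLp_ofLp]

lemma setOf_exists_far_pair_qmeas_subset {N L M : ℕ} (V : Fin L → Submodule ℝ (Fin N → ℝ))
    (d Δ : ℝ) :
    {ωs : Fin M → (Fin N → ℝ) × ℝ | ∃ x x' : Fin N → ℝ,
      ((∃ i, x ∈ V i) ∧ √(∑ i, x i ^ 2) ≤ 1) ∧ ((∃ i, x' ∈ V i) ∧ √(∑ i, x' i ^ 2) ≤ 1) ∧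
        d < √(∑ i, (x i - x' i) ^ 2) ∧ ∀ m, qmeas Δ (ωs m) x = qmeas Δ (ωs m) x'} ⊆
      farConsistentPairEvent (Fin M)
        (subspaceUnionBall fun i => (V i).map (WithLp.linearEquiv 2 ℝ (Fin N → ℝ)).symm.toLinearMap)
        (fun ω u => qmeas Δ ω u.ofLp) d := by
  rintro ωs ⟨x, x', ⟨⟨i, hi⟩, hx⟩, ⟨⟨j, hj⟩, hx'⟩, hxx', h⟩
  refine ⟨WithLp.toLp 2 x, mem_iUnion.2 ⟨i, ?_, ?_⟩, WithLp.toLp 2 x', mem_iUnion.2 ⟨j, ?_, ?_⟩,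
    by rwa [dist_toLp_eq_sqrt_sum], h⟩
  · simpa using hi
  · rwa [mem_closedBall_zero_iff, norm_toLp_eq_sqrt_sum]
  · simpa using hj
  · rwa [mem_closedBall_zero_iff, norm_toLp_eq_sqrt_sum]

lemma isProbabilityMeasure_unif {Δ : ℝ} (hΔ : 0 < Δ) : IsProbabilityMeasure (unif Δ) := by
  constructor
  rw [unif, Measure.smul_apply, Measure.restrict_apply MeasurableSet.univ, univ_inter,
    Real.volume_Icc, smul_eq_mul, sub_zero]
  exact ENNReal.inv_mul_cancel (by simp [hΔ]) ENNReal.ofReal_ne_top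

lemma isProbabilityMeasure_measLaw (N : ℕ) (v : ℝ≥0) {Δ : ℝ} (hΔ : 0 < Δ) :
    IsProbabilityMeasure (measLaw N v Δ) :=
  have := isProbabilityMeasure_unif hΔ
  inferInstanceAs (IsProbabilityMeasure (Measure.prod _ _))

theorem union_of_subspaces_bound_general (N K L M : ℕ) (d co cr Δ : ℝ) (hd : 0 < d) (hco : 0 < co)
    (hcr0 : 1 / 2 < cr) (hcr1 : cr < 1) (hΔ : 0 < Δ)
    (V : Fin L → Submodule ℝ (Fin N → ℝ)) (hV : ∀ i, Module.finrank ℝ (V i) ≤ K)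
    (hpair : ∀ x x' : Fin N → ℝ, d ≤ Real.sqrt (∑ i, (x i - x' i) ^ 2) →
      measLaw N (N : NNReal)⁻¹ Δ
          {ω | ∃ u ∈ ballE (3 * d / (co * Real.sqrt N)) x,
               ∃ u' ∈ ballE (3 * d / (co * Real.sqrt N)) x',
                 qmeas Δ ω u = qmeas Δ ω u'} ≤ ENNReal.ofReal cr) :
    (Measure.pi fun _ : Fin M => measLaw N (N : NNReal)⁻¹ Δ)
        {ωs : Fin M → (Fin N → ℝ) × ℝ |
          ∃ x x' : Fin N → ℝ,
            ((∃ i, x ∈ V i) ∧ Real.sqrt (∑ i, x i ^ 2) ≤ 1) ∧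
            ((∃ i, x' ∈ V i) ∧ Real.sqrt (∑ i, x' i ^ 2) ≤ 1) ∧
            d < Real.sqrt (∑ i, (x i - x' i) ^ 2) ∧
            ∀ m, qmeas Δ (ωs m) x = qmeas Δ (ωs m) x'} ≤
      ENNReal.ofReal ((L : ℝ) ^ 2 * (co * Real.sqrt N / d) ^ (2 * K) * cr ^ M) := by
  set μ := measLaw N (N : NNReal)⁻¹ Δ
  have := isProbabilityMeasure_measLaw N (N : NNReal)⁻¹ hΔ
  set ε := 3 * d / (co * √N)
  set W : Fin L → Submodule ℝ (EuclideanSpace ℝ (Fin N)) :=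
    fun i => (V i).map (WithLp.linearEquiv 2 ℝ (Fin N → ℝ)).symm.toLinearMap
  set q : (Fin N → ℝ) × ℝ → EuclideanSpace ℝ (Fin N) → ℤ := fun ω u => qmeas Δ ω u.ofLp
  have hpair' (x x' : EuclideanSpace ℝ (Fin N)) (h : d ≤ dist x x') :
      μ (ballPairConsistency q ε x x') ≤ ENNReal.ofReal cr :=
    measure_ballPairConsistency_qmeas_le μ hpair h
  refine (measure_mono (setOf_exists_far_pair_qmeas_subset V d Δ)).trans ?_
  rcases (farConsistentPairEvent (Fin M) (subspaceUnionBall W) q d).eq_empty_or_nonempty with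
    hempty | hne
  · rw [hempty, measure_empty]
    exact zero_le
  have := nontrivial_of_farConsistentPairEvent_nonempty hd.le hne
  have hε : 0 < ε := by
    have : (0 : ℝ) < √N := by
      simpa using Module.finrank_pos (R := ℝ) (M := EuclideanSpace ℝ (Fin N))
    positivity
  have h2ε : 2 * ε < d := two_mul_lt_of_measure_ballPairConsistency_lt_one μ q hd.le
    fun x x' h => (hpair' x x' h).trans_lt (ENNReal.ofReal_lt_one.2 hcr1)
  have hd2 := lt_two_of_farConsistentPairEvent_nonempty hne
  have h3ε : 3 / ε = co * √N / d := by
    simp only [ε]; field_simp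
  have := measure_farConsistentPairEvent_le μ W
    (fun i => (LinearEquiv.finrank_map_eq _ _).trans_le (hV i)) q (ε := ε.toNNReal)
    (Real.toNNReal_pos.2 hε) (Real.toNNReal_le_one.2 (by linarith [hd2]))
    (by linarith : (0 : ℝ) ≤ cr)
    (fun x x' h => by simpa [Real.coe_toNNReal _ hε.le] using hpair' x x' h.le) (κ := Fin M)
  rwa [Fintype.card_fin, Fintype.card_fin, Real.coe_toNNReal _ hε.le, h3ε] at this

/-- Union-of-subspaces guarantee: if `S` is the union of `L` subspaces of `ℝ^N` of
dimension at most `K` intersected with the unit ball, `σ = 1/√N`, and the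
single-measurement ball-pair consistency bound at radius `ε = 3d/(c_o√N)` is at most
`c_r`, then the probability that some `x,x' ∈ S` with `‖x−x'‖₂ > d` produce identical
`M`-bit quantized measurements is at most `L²·(c_o√N/d)^{2K}·c_r^M`. -/
theorem union_of_subspaces_bound (N K L M : ℕ) (hN : 1 ≤ N) (hK : 1 ≤ K) (hL : 1 ≤ L)
    (hM : 1 ≤ M) (d co cr Δ : ℝ) (hd : 0 < d) (hco : 0 < co)
    (hcr0 : 1 / 2 < cr) (hcr1 : cr < 1) (hΔ : 0 < Δ)
    (V : Fin L → Submodule ℝ (Fin N → ℝ)) (hV : ∀ i, Module.finrank ℝ (V i) ≤ K)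
    (hpair : ∀ x x' : Fin N → ℝ, d ≤ Real.sqrt (∑ i, (x i - x' i) ^ 2) →
      measLaw N (N : NNReal)⁻¹ Δ
          {ω | ∃ u ∈ ballE (3 * d / (co * Real.sqrt N)) x,
               ∃ u' ∈ ballE (3 * d / (co * Real.sqrt N)) x',
                 qmeas Δ ω u = qmeas Δ ω u'} ≤ ENNReal.ofReal cr) :
    (Measure.pi fun _ : Fin M => measLaw N (N : NNReal)⁻¹ Δ)
        {ωs : Fin M → (Fin N → ℝ) × ℝ |
          ∃ x x' : Fin N → ℝ,
            ((∃ i, x ∈ V i) ∧ Real.sqrt (∑ i, x i ^ 2) ≤ 1) ∧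
            ((∃ i, x' ∈ V i) ∧ Real.sqrt (∑ i, x' i ^ 2) ≤ 1) ∧
            d < Real.sqrt (∑ i, (x i - x' i) ^ 2) ∧
            ∀ m, qmeas Δ (ωs m) x = qmeas Δ (ωs m) x'} ≤
      ENNReal.ofReal ((L : ℝ) ^ 2 * (co * Real.sqrt N / d) ^ (2 * K) * cr ^ M) :=
  union_of_subspaces_bound_general N K L M d co cr Δ hd hco hcr0 hcr1 hΔ V hV hpair
end
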